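/- Let f : ℝ^n → ℝ be differentiable with antitone gradient (DR property) and monotone (x ⪯ y implies f(x) ≤ f(y)) on ℝ₊^n. Then for all x, y ∈ ℝ₊^n, f(y) - f(x) ≤ ⟨∇f(x), y⟩. -/

import Mathlib

/-!
Put `d i = max (y i - x i) 0`, so that `x + d = x ⊔ y` and `f y ≤ f (x + d)` by monotonicity.
The segment from `x` to `x + d` stays in the orthant above `x`, so by the DR property the slope
`⟪∇f (x + t • d), d⟫` along it is at most `⟪∇f x, d⟫`, and the mean value inequality gives
`f (x + d) - f x ≤ ⟪∇f x, d⟫`. Monotonicity also forces `∇f x ⪰ 0`, and `d ≤ y`, hence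
`⟪∇f x, d⟫ ≤ ⟪∇f x, y⟫`.
-/

open RealInnerProductSpace

open Set Filter

section LineRestriction

variable {E : Type*} [NormedAddCommGroup E] [NormedSpace ℝ E] {f : E → ℝ}

theorem DifferentiableAt.hasDerivAt_comp_add_smul {p v : E} {t : ℝ}
    (hf : DifferentiableAt ℝ f (p + t • v)) :
    HasDerivAt (fun s : ℝ => f (p + s • v)) (fderiv ℝ f (p + t • v) v) t :=
  hf.hasFDerivAt.comp_hasDerivAt t (by simpa using ((hasDerivAt_id t).smul_const v).const_add p)

theorem fderiv_apply_nonneg_of_monotoneOn_ray {p v : E} (hf : DifferentiableAt ℝ f p)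
    (hmono : MonotoneOn (fun t : ℝ => f (p + t • v)) (Ici 0)) : 0 ≤ fderiv ℝ f p v := by
  have hderiv : HasDerivAt (fun t : ℝ => f (p + t • v)) (fderiv ℝ f p v) 0 := by
    have hf₀ : DifferentiableAt ℝ f (p + (0 : ℝ) • v) := by simpa using hf
    simpa using hf₀.hasDerivAt_comp_add_smul
  have hacc : AccPt (0 : ℝ) (𝓟 (Ici 0)) := by
    rw [accPt_principal_iff_clusterPt, ← mem_closure_iff_clusterPt]
    simp only [Ici_sdiff_left, closure_Ioi, mem_Ici, le_refl]
  exact hderiv.hasDerivWithinAt.nonneg_of_monotoneOn hacc hmono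

theorem sub_le_fderiv_apply_of_fderiv_apply_le (hf : Differentiable ℝ f) {x d : E}
    (hle : ∀ t ∈ Ioo (0 : ℝ) 1, fderiv ℝ f (x + t • d) d ≤ fderiv ℝ f x d) :
    f (x + d) - f x ≤ fderiv ℝ f x d := by
  have hderiv (t : ℝ) := (hf (x + t • d)).hasDerivAt_comp_add_smul
  have hdiff : Differentiable ℝ (fun t : ℝ => f (x + t • d)) := fun t => (hderiv t).differentiableAt
  have := (convex_Icc (0 : ℝ) 1).image_sub_le_mul_sub_of_deriv_le hdiff.continuous.continuousOn
    hdiff.differentiableOn (C := fderiv ℝ f x d) (fun t ht => ?_) 0 (by simp) 1 (by simp) zero_le_one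
  · simpa using this
  · rw [interior_Icc] at ht
    exact (hderiv t).deriv ▸ hle t ht

end LineRestriction

section Orthant

variable {ι : Type*} {f : EuclideanSpace ℝ ι → ℝ}

theorem add_smul_apply_nonneg {p v : EuclideanSpace ℝ ι} (hp : ∀ i, 0 ≤ p i) (hv : ∀ i, 0 ≤ v i)
    {t : ℝ} (ht : 0 ≤ t) (i : ι) : 0 ≤ (p + t • v) i := by
  simpa using add_nonneg (hp i) (mul_nonneg ht (hv i))

theorem le_add_smul_apply {p v : EuclideanSpace ℝ ι} (hv : ∀ i, 0 ≤ v i) {t : ℝ} (ht : 0 ≤ t)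
    (i : ι) : p i ≤ (p + t • v) i := by
  simpa using mul_nonneg ht (hv i)

theorem monotoneOn_comp_add_smul_of_nonneg
    (hmono : ∀ x y : EuclideanSpace ℝ ι, (∀ i, 0 ≤ x i) → (∀ i, 0 ≤ y i) →
      (∀ i, x i ≤ y i) → f x ≤ f y)
    {p v : EuclideanSpace ℝ ι} (hp : ∀ i, 0 ≤ p i) (hv : ∀ i, 0 ≤ v i) :
    MonotoneOn (fun t : ℝ => f (p + t • v)) (Ici 0) := by
  intro s hs t ht hst
  refine hmono _ _ (add_smul_apply_nonneg hp hv hs) (add_smul_apply_nonneg hp hv ht) fun i => ?_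
  simpa using mul_le_mul_of_nonneg_right hst (hv i)

variable [Fintype ι]

theorem inner_le_inner_of_apply_le {u v w : EuclideanSpace ℝ ι} (huv : ∀ i, u i ≤ v i)
    (hw : ∀ i, 0 ≤ w i) : ⟪u, w⟫ ≤ ⟪v, w⟫ := by
  simp only [PiLp.inner_apply, RCLike.inner_apply, conj_trivial]
  exact Finset.sum_le_sum fun i _ => mul_le_mul_of_nonneg_left (huv i) (hw i)

theorem gradient_apply_nonneg_of_monotone {p : EuclideanSpace ℝ ι} (hf : DifferentiableAt ℝ f p)
    (hmono : ∀ x y : EuclideanSpace ℝ ι, (∀ i, 0 ≤ x i) → (∀ i, 0 ≤ y i) →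
      (∀ i, x i ≤ y i) → f x ≤ f y)
    (hp : ∀ i, 0 ≤ p i) (i : ι) : 0 ≤ gradient f p i := by
  classical
  have hsingle : ∀ j, 0 ≤ EuclideanSpace.single i (1 : ℝ) j := fun j => by
    rw [PiLp.single_apply]; positivity
  have := fderiv_apply_nonneg_of_monotoneOn_ray hf
    (monotoneOn_comp_add_smul_of_nonneg hmono hp hsingle)
  rwa [← inner_gradient_left, EuclideanSpace.inner_single_right, one_mul, conj_trivial] at this

theorem inner_gradient_add_smul_le
    (hDR : ∀ x y : EuclideanSpace ℝ ι, (∀ i, 0 ≤ x i) → (∀ i, 0 ≤ y i) →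
      (∀ i, x i ≤ y i) → ∀ i, gradient f y i ≤ gradient f x i)
    {x d : EuclideanSpace ℝ ι} (hx : ∀ i, 0 ≤ x i) (hd : ∀ i, 0 ≤ d i) {t : ℝ} (ht : 0 ≤ t) :
    ⟪gradient f (x + t • d), d⟫ ≤ ⟪gradient f x, d⟫ :=
  inner_le_inner_of_apply_le
    (hDR _ _ hx (add_smul_apply_nonneg hx hd ht) (le_add_smul_apply hd ht)) hd

theorem sub_le_inner_gradient_of_antitone (hf : Differentiable ℝ f)
    (hDR : ∀ x y : EuclideanSpace ℝ ι, (∀ i, 0 ≤ x i) → (∀ i, 0 ≤ y i) →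
      (∀ i, x i ≤ y i) → ∀ i, gradient f y i ≤ gradient f x i)
    {x d : EuclideanSpace ℝ ι} (hx : ∀ i, 0 ≤ x i) (hd : ∀ i, 0 ≤ d i) :
    f (x + d) - f x ≤ ⟪gradient f x, d⟫ := by
  rw [inner_gradient_left]
  refine sub_le_fderiv_apply_of_fderiv_apply_le hf fun t ht => ?_
  simpa only [inner_gradient_left] using inner_gradient_add_smul_le hDR hx hd ht.1.le

end Orthant

theorem stmt_6 (n : ℕ) (f : EuclideanSpace ℝ (Fin n) → ℝ)
    (hdiff : Differentiable ℝ f)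
    (hDR : ∀ x y : EuclideanSpace ℝ (Fin n), (∀ i, 0 ≤ x i) → (∀ i, 0 ≤ y i) →
      (∀ i, x i ≤ y i) → ∀ i, gradient f y i ≤ gradient f x i)
    (hmono : ∀ x y : EuclideanSpace ℝ (Fin n), (∀ i, 0 ≤ x i) → (∀ i, 0 ≤ y i) →
      (∀ i, x i ≤ y i) → f x ≤ f y)
    (x y : EuclideanSpace ℝ (Fin n)) (hx : ∀ i, 0 ≤ x i) (hy : ∀ i, 0 ≤ y i) :
    f y - f x ≤ ⟪gradient f x, y⟫ := by
  set d : EuclideanSpace ℝ (Fin n) := WithLp.toLp 2 fun i => max (y i - x i) 0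
  have hd : ∀ i, 0 ≤ d i := fun i => le_max_right _ _
  have hdy : ∀ i, d i ≤ y i := fun i => max_le (by linarith [hx i]) (hy i)
  have hfy_le : f y ≤ f (x + d) := by
    refine hmono _ _ hy (fun i => ?_) fun i => ?_
    · simpa using add_nonneg (hx i) (hd i)
    · simp only [PiLp.add_apply, d]
      linarith [le_max_left (y i - x i) 0]
  calc f y - f x ≤ f (x + d) - f x := by gcongr
    _ ≤ ⟪gradient f x, d⟫ := sub_le_inner_gradient_of_antitone hdiff hDR hx hd
    _ ≤ ⟪gradient f x, y⟫ := by
      rw [real_inner_comm d, real_inner_comm y]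
      exact inner_le_inner_of_apply_le hdy (gradient_apply_nonneg_of_monotone (hdiff x) hmono hx)
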